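/- Let Δ, v_i, v_∂, v_g, e, f be integers with v_i ≥ 0 and Δ ≥ 3. If 3f + v_∂ ≤ 2e, (v_i + v_∂) − e + f = 1, and 2(v_∂ − v_g) + Δ·v_i ≤ e, then 2·v_g ≥ 3 (in particular v_g ≥ 2; hence no such configuration exists when v_g ≤ 1). -/

import Mathlib

/-! Eliminating `f` with Euler's formula, the face condition bounds the edges by
`e ≤ 3 v_i + 2 v_∂ - 3`; against the endpoint count this leaves `2 v_g ≥ 3 + (Δ - 3) v_i ≥ 3`. -/

lemma edges_le_of_euler_of_face_bound {vi vb e f : ℤ}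
    (hface : 3 * f + vb ≤ 2 * e) (heuler : (vi + vb) - e + f = 1) :
    e ≤ 3 * vi + 2 * vb - 3 := by
  linarith

/-- Euler-characteristic counting argument (Section 7, proof of Theorem 1.3):
if every face has at least 3 sides, Euler's formula holds for the graph in a disk,
and every non-ghost boundary vertex contributes at least 2 edge endpoints while
every interior vertex contributes at least `Δ`, then `2 * v_g ≥ 3`. -/
theorem stmt_0 (Δ vi vb vg e f : ℤ)
    (hvi : vi ≥ 0) (hΔ : Δ ≥ 3)
    (hface : 3 * f + vb ≤ 2 * e)
    (heuler : (vi + vb) - e + f = 1)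
    (hcount : 2 * (vb - vg) + Δ * vi ≤ e) :
    2 * vg ≥ 3 := by
  have hedges := edges_le_of_euler_of_face_bound hface heuler
  have hexcess : 0 ≤ (Δ - 3) * vi := mul_nonneg (by linarith) hvi
  linarith
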